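/- The standard protocol P^intent implements the knowledge-based program 𝐏 (instantiated with next(h) = |h| mod |L_in| and σ(h) = ∅) with respect to the context γ_intent(F) for each adversary model F ∈ {CR, SO}. -/

import Mathlib

open scoped Classical

noncomputable section

namespace Inter

/-- Actions available to each agent. -/
inductive Act where
  | go
  | noop
deriving DecidableEq

/-- A move through the intersection: an incoming lane paired with an outgoing lane. -/
abbrev Move (kin kout : ℕ) := Fin kin × Fin kout

/-- An adversary: a conflict-free arrival schedule, a transmission environment and
transmitter/receiver failure functions. -/
structure Adversary (kin kout : ℕ) where
  arrive : ℕ → ℕ × Fin kin × Fin kout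
  conflictFree : ∀ i j : ℕ, i ≠ j → (arrive i).1 = (arrive j).1 →
    (arrive i).2.1 ≠ (arrive j).2.1
  T : Set ((Fin kin × ℕ) × (Fin kin × ℕ))
  T_front : ∀ l l' : Fin kin, ((l, 0), (l', 0)) ∈ T
  Ft : ℕ → ℕ → Bool
  Fr : ℕ → ℕ → Bool

/-- The lane component of a sensor reading: an incoming lane, ⊥ (not yet arrived),
or ⊤ (departed). -/
inductive LaneStatus (kin : ℕ) where
  | inLane (l : Fin kin)
  | notArrived
  | finished

/-- The minimal sensor reading: front, lane and intent. -/
structure Reading (kin kout : ℕ) where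
  front : Prop
  lane : LaneStatus kin
  intent : Fin kout

/-- Environment states record the adversary, the time, a queue for each incoming lane
and the set of departed agents. -/
structure EnvState (kin kout : ℕ) where
  adv : Adversary kin kout
  time : ℕ
  queue : Fin kin → List ℕ
  done : Set ℕ

/-- Local states: a memory state together with a sensor reading
(the minimal reading plus possibly extra sensor information). -/
abbrev LState (kin kout : ℕ) (Mem Extra : Type*) := Mem × Reading kin kout × Extra

/-- Global states: an environment state and local states for all agents. -/
abbrev GState (kin kout : ℕ) (Mem Extra : Type*) :=
  EnvState kin kout × (ℕ → LState kin kout Mem Extra)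

/-- A run. -/
abbrev Run (kin kout : ℕ) (Mem Extra : Type*) := ℕ → GState kin kout Mem Extra

/-- An action protocol maps each agent's local state to an action. -/
abbrev Prot (kin kout : ℕ) (Mem Extra : Type*) := ℕ → LState kin kout Mem Extra → Act

variable {kin kout : ℕ} {Mem Extra Msg : Type*}

/-- Agent `i` is at the front of some queue. -/
def isFront (e : EnvState kin kout) (i : ℕ) : Prop :=
  ∃ l : Fin kin, (e.queue l).head? = some i

/-- The (lane, position) of agent `i`, if it is in some queue. -/
def posAt (e : EnvState kin kout) (i : ℕ) : Option (Fin kin × ℕ) :=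
  if h : ∃ l : Fin kin, i ∈ e.queue l then some (h.choose, (e.queue h.choose).idxOf i)
  else none

/-- The intended departure lane of agent `i`, as given by the arrival schedule. -/
def intentOf (e : EnvState kin kout) (i : ℕ) : Fin kout := (e.adv.arrive i).2.2

/-- The move `(lane_i, intent_i)` of agent `i`, if it is in some queue. -/
def moveAt (e : EnvState kin kout) (i : ℕ) : Option (Move kin kout) :=
  (posAt e i).map (fun p => (p.1, intentOf e i))

/-- The minimal sensor reading of agent `i` in environment state `e`. -/
def minimalReading (e : EnvState kin kout) (i : ℕ) : Reading kin kout where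
  front := isFront e i
  lane :=
    if h : ∃ l : Fin kin, i ∈ e.queue l then LaneStatus.inLane h.choose
    else if i ∈ e.done then LaneStatus.finished else LaneStatus.notArrived
  intent := intentOf e i

/-- An information-exchange protocol: initial memories, extra sensor information,
a message function and a memory-update function. -/
structure IEP (kin kout : ℕ) (Mem Extra Msg : Type*) where
  initMem : ℕ → Mem
  extra : EnvState kin kout → ℕ → Extra
  msg : ℕ → LState kin kout Mem Extra → Act → Reading kin kout × Extra → Option Msg
  upd : ℕ → LState kin kout Mem Extra → Act → Set Msg → Mem

/-- One round of the system: agents act, queues are updated (dequeues for agents that go,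
enqueues for new arrivals), new sensor readings are taken, messages are broadcast and
received subject to the transmission environment and the failure functions, and memories
are updated. -/
def step (E : IEP kin kout Mem Extra Msg) (P : Prot kin kout Mem Extra)
    (g : GState kin kout Mem Extra) : GState kin kout Mem Extra :=
  let e := g.1
  let act : ℕ → Act := fun i => P i (g.2 i)
  let q' : Fin kin → List ℕ := fun l =>
    let q1 := match (e.queue l).head? with
      | some i => if act i = Act.go then (e.queue l).tail else e.queue l
      | none => e.queue l
    if h : ∃ i l', e.adv.arrive i = (e.time + 1, l, l') then q1 ++ [h.choose] else q1
  let done' : Set ℕ := e.done ∪ {i | isFront e i ∧ act i = Act.go}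
  let e' : EnvState kin kout := ⟨e.adv, e.time + 1, q', done'⟩
  let sens : ℕ → Reading kin kout × Extra := fun i => (minimalReading e' i, E.extra e' i)
  let rcv : ℕ → Set Msg := fun i =>
    if e.adv.Fr e.time i = true ∧ (posAt e' i).isSome = true then
      {m | ∃ j pj pi, E.msg j (g.2 j) (act j) (sens j) = some m ∧
            e.adv.Ft e.time j = true ∧
            posAt e' j = some pj ∧ posAt e' i = some pi ∧ (pj, pi) ∈ e.adv.T}
    else ∅
  (e', fun i => (E.upd i (g.2 i) (act i) (rcv i), sens i))

/-- An intersection context: an information-exchange protocol together with an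
adversary model. -/
structure Ctx (kin kout : ℕ) (Mem Extra Msg : Type*) where
  iep : IEP kin kout Mem Extra Msg
  adv : Set (Adversary kin kout)

/-- Initial global states: time 0, empty queues, no departed agents, an adversary
from the adversary model, and initial local states. -/
def Init (C : Ctx kin kout Mem Extra Msg) (g : GState kin kout Mem Extra) : Prop :=
  g.1.adv ∈ C.adv ∧ g.1.time = 0 ∧ (∀ l, g.1.queue l = []) ∧ g.1.done = ∅ ∧
  ∀ i, g.2 i = (C.iep.initMem i, minimalReading g.1 i, C.iep.extra g.1 i)

/-- The interpreted system `I_{γ,P}`: the set of runs of protocol `P` in context `γ`. -/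
def Runs (C : Ctx kin kout Mem Extra Msg) (P : Prot kin kout Mem Extra) :
    Set (Run kin kout Mem Extra) :=
  {r | Init C (r 0) ∧ ∀ m, r (m + 1) = step C.iep P (r m)}

/-- `front_i` holds at the point `(r,m)`. -/
def frontAt (r : Run kin kout Mem Extra) (m i : ℕ) : Prop := isFront (r m).1 i

/-- `going_i` abbreviates `front_i ∧ ◯¬front_i`. -/
def goingAt (r : Run kin kout Mem Extra) (m i : ℕ) : Prop :=
  frontAt r m i ∧ ¬ frontAt r (m + 1) i

/-- `GO(r,m)`: the set of agents that go through the intersection in round `m+1`. -/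
def GOs (r : Run kin kout Mem Extra) (m : ℕ) : Set ℕ := {i | goingAt r m i}

/-- Validity: an agent goes through the intersection only from the front of its queue. -/
def ValidityP (C : Ctx kin kout Mem Extra Msg) (P : Prot kin kout Mem Extra) : Prop :=
  ∀ r ∈ Runs C P, ∀ m i, goingAt r m i → frontAt r m i

/-- Safety: agents that go simultaneously have compatible moves. -/
def SafetyP (O : Move kin kout → Move kin kout → Prop)
    (C : Ctx kin kout Mem Extra Msg) (P : Prot kin kout Mem Extra) : Prop :=
  ∀ r ∈ Runs C P, ∀ m i j, i ≠ j → goingAt r m i → goingAt r m j →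
    ∀ mi mj, moveAt (r m).1 i = some mi → moveAt (r m).1 j = some mj → O mi mj

/-- Liveness: every agent at the front of a queue eventually goes. -/
def LivenessP (C : Ctx kin kout Mem Extra Msg) (P : Prot kin kout Mem Extra) : Prop :=
  ∀ r ∈ Runs C P, ∀ m i, frontAt r m i → ∃ m' ≥ m, goingAt r m' i

/-- An intersection protocol: an action protocol satisfying Validity, Safety and Liveness. -/
def IsIntersectionProtocol (O : Move kin kout → Move kin kout → Prop)
    (C : Ctx kin kout Mem Extra Msg) (P : Prot kin kout Mem Extra) : Prop :=
  ValidityP C P ∧ SafetyP O C P ∧ LivenessP C P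

/-- `safe-to-go_i` at `(r,m)`: `i` is at the front of its queue (position 0) and the moves
of the agents in `GO(r,m) ∪ {i}` are pairwise compatible. -/
def safeToGo (O : Move kin kout → Move kin kout → Prop)
    (r : Run kin kout Mem Extra) (m i : ℕ) : Prop :=
  (∃ p, posAt (r m).1 i = some p ∧ p.2 = 0) ∧
  ∀ j ∈ GOs r m ∪ {i}, ∀ k ∈ GOs r m ∪ {i}, j ≠ k →
    ∀ mj mk, moveAt (r m).1 j = some mj → moveAt (r m).1 k = some mk → O mj mk

/-- `P` has unnecessary waiting with respect to `γ`. -/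
def UnnecessaryWaiting (O : Move kin kout → Move kin kout → Prop)
    (C : Ctx kin kout Mem Extra Msg) (P : Prot kin kout Mem Extra) : Prop :=
  ∃ r ∈ Runs C P, ∃ m i, safeToGo O r m i ∧ i ∉ GOs r m

/-- The time at which agent `i` goes through the intersection in run `r` (∞ if never). -/
def gotime (r : Run kin kout Mem Extra) (i : ℕ) : ℕ∞ :=
  sInf {n : ℕ∞ | ∃ m : ℕ, goingAt r m i ∧ n = (m : ℕ∞)}

/-- `P` dominates `P'`: on all corresponding runs, every agent goes at least as early. -/
def Dominates (C : Ctx kin kout Mem Extra Msg) (P P' : Prot kin kout Mem Extra) : Prop :=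
  ∀ r ∈ Runs C P, ∀ r' ∈ Runs C P', r 0 = r' 0 → ∀ i, gotime r i ≤ gotime r' i

def StrictDominates (C : Ctx kin kout Mem Extra Msg) (P P' : Prot kin kout Mem Extra) : Prop :=
  Dominates C P P' ∧ ¬ Dominates C P' P

/-- `P` is optimal: no intersection protocol strictly dominates it. -/
def Optimal (O : Move kin kout → Move kin kout → Prop)
    (C : Ctx kin kout Mem Extra Msg) (P : Prot kin kout Mem Extra) : Prop :=
  ¬ ∃ P' : Prot kin kout Mem Extra,
      IsIntersectionProtocol O C P' ∧ StrictDominates C P' P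

/-- `P` lexicographically dominates `P'`. -/
def LexDominates (C : Ctx kin kout Mem Extra Msg) (P P' : Prot kin kout Mem Extra) : Prop :=
  ∀ r ∈ Runs C P, ∀ r' ∈ Runs C P', r 0 = r' 0 →
    (∀ m, GOs r m = GOs r' m) ∨
    ∃ m, (∀ k < m, GOs r k = GOs r' k) ∧ GOs r m ≠ GOs r' m ∧ GOs r' m ⊂ GOs r m

def StrictLexDominates (C : Ctx kin kout Mem Extra Msg) (P P' : Prot kin kout Mem Extra) :
    Prop :=
  LexDominates C P P' ∧ ¬ LexDominates C P' P

/-- `P` is lexicographically optimal: no intersection protocol strictly lexicographically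
dominates it. -/
def LexOptimal (O : Move kin kout → Move kin kout → Prop)
    (C : Ctx kin kout Mem Extra Msg) (P : Prot kin kout Mem Extra) : Prop :=
  ¬ ∃ P' : Prot kin kout Mem Extra,
      IsIntersectionProtocol O C P' ∧ StrictLexDominates C P' P

/-- Knowledge: `K_i φ` holds at `(r,m)` iff `φ` holds at all points of the system where
agent `i` has the same local state. -/
def Kn (S : Set (Run kin kout Mem Extra)) (i : ℕ)
    (φ : Run kin kout Mem Extra → ℕ → Prop) (r : Run kin kout Mem Extra) (m : ℕ) : Prop :=
  ∀ r' ∈ S, ∀ m', (r' m').2 i = (r m).2 i → φ r' m'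

/-- The adversary model has no failures. -/
def NoFailures (C : Ctx kin kout Mem Extra Msg) : Prop :=
  ∀ α ∈ C.adv, ∀ k i, α.Ft k i = true ∧ α.Fr k i = true

/-- Full information exchange: every agent broadcasts (an injective encoding of) its
entire local state in every round, and records every broadcast it receives. -/
def FullInfo (C : Ctx kin kout Mem Extra Msg) : Prop :=
  (∃ enc : LState kin kout Mem Extra → Msg, Function.Injective enc ∧
      ∀ i s a o, C.iep.msg i s a o = some (enc s)) ∧
  (∀ i s a, Function.Injective fun B : Set Msg => C.iep.upd i s a B)

/-- A sufficiently rich context: every agent that will be at the front of some lane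
broadcasts a message encoding its lane and intent, tagged as coming from the front;
no other message is tagged as a front message; and each agent records the
(lane, intent) pair of each front agent it hears from. -/
def SufficientlyRich (C : Ctx kin kout Mem Extra Msg) : Prop :=
  ∃ dec : Msg → Option (Move kin kout),
    (∀ i s a (o : Reading kin kout × Extra) (l : Fin kin),
        o.1.front → o.1.lane = LaneStatus.inLane l →
        ∃ msg, C.iep.msg i s a o = some msg ∧ dec msg = some (l, o.1.intent)) ∧
    (∀ i s a (o : Reading kin kout × Extra), ¬ o.1.front →
        ∀ msg, C.iep.msg i s a o = some msg → dec msg = none) ∧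
    (∃ rec : Mem → Set (Move kin kout),
        ∀ i s a B, rec (C.iep.upd i s a B) = {mv | ∃ msg ∈ B, dec msg = some mv})

/-- The set of agents at the front of a queue. -/
def FrontSet (e : EnvState kin kout) : Set ℕ := {i | isFront e i}

/-- `P` depends only on the agents at the front of their queues. -/
def DependsOnlyOnFront (C : Ctx kin kout Mem Extra Msg) (P : Prot kin kout Mem Extra) :
    Prop :=
  ∀ r ∈ Runs C P, ∀ r' ∈ Runs C P, ∀ m m' i,
    FrontSet (r m).1 = FrontSet (r' m').1 → P i ((r m).2 i) = P i ((r' m').2 i)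

/-- The choices of an adversary in a single round: arrivals, the transmission
environment and the failure values. -/
structure Choice (kin kout : ℕ) where
  arrivals : Set (ℕ × Fin kin × Fin kout)
  T : Set ((Fin kin × ℕ) × (Fin kin × ℕ))
  Ft : ℕ → Bool
  Fr : ℕ → Bool

/-- The choices of adversary `α` in round `m+1`. -/
def choiceAt (α : Adversary kin kout) (m : ℕ) : Choice kin kout where
  arrivals := {p | α.arrive p.1 = (m + 1, p.2.1, p.2.2)}
  T := α.T
  Ft := fun i => α.Ft m i
  Fr := fun i => α.Fr m i

/-- The adversary history `H(α,m) = ⟨α_0, …, α_{m-1}⟩`. -/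
def hist (α : Adversary kin kout) (m : ℕ) : List (Choice kin kout) :=
  (List.range m).map (choiceAt α)

/-- The adversary history of run `r` up to time `m`. -/
def histOf (r : Run kin kout Mem Extra) (m : ℕ) : List (Choice kin kout) :=
  hist (r 0).1.adv m

/-- An intersection policy: a map from adversary histories to sets of permitted moves. -/
abbrev Policy (kin kout : ℕ) := List (Choice kin kout) → Set (Move kin kout)

/-- The set `H_γ` of adversary histories of the context. -/
def Hists (C : Ctx kin kout Mem Extra Msg) : Set (List (Choice kin kout)) :=
  {h | ∃ α ∈ C.adv, ∃ m, h = hist α m}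

/-- A feasible infinite sequence of histories: one arising from a single adversary. -/
def Feasible (F : Set (Adversary kin kout)) (h : ℕ → List (Choice kin kout)) : Prop :=
  ∃ α ∈ F, ∀ m, h m = hist α m

/-- Conflict-freedom of an intersection policy. -/
def ConflictFree (O : Move kin kout → Move kin kout → Prop)
    (C : Ctx kin kout Mem Extra Msg) (σ : Policy kin kout) : Prop :=
  ∀ h ∈ Hists C, ∀ mv ∈ σ h, ∀ mv' ∈ σ h, mv ≠ mv' → O mv mv'

/-- Fairness of an intersection policy. -/
def FairPolicy (C : Ctx kin kout Mem Extra Msg) (σ : Policy kin kout) : Prop :=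
  ∀ h : ℕ → List (Choice kin kout), Feasible C.adv h →
    ∀ mv : Move kin kout, ∀ m, ∃ m' ≥ m, mv ∈ σ (h m')

/-- A correct intersection policy: conflict-free and fair. -/
def CorrectPolicy (O : Move kin kout → Move kin kout → Prop)
    (C : Ctx kin kout Mem Extra Msg) (σ : Policy kin kout) : Prop :=
  ConflictFree O C σ ∧ FairPolicy C σ

/-- A synchronous context: the time is encoded in each agent's local state. -/
def Synchronous (C : Ctx kin kout Mem Extra Msg) : Prop :=
  ∃ clock : LState kin kout Mem Extra → ℕ,
    ∀ P : Prot kin kout Mem Extra, ∀ r ∈ Runs C P, ∀ m i, clock ((r m).2 i) = m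

/-- The knowledge condition of the knowledge-based program `P^σ`:
`front_i ∧ (lane_i, intent_i) ∈ σ`. -/
def phiSigma (σ : Policy kin kout) (i : ℕ) (r : Run kin kout Mem Extra) (m : ℕ) : Prop :=
  frontAt r m i ∧ ∃ mv, moveAt (r m).1 i = some mv ∧ mv ∈ σ (histOf r m)

/-- `P` implements the knowledge-based program `if K_i φ_i then go else noop` in `γ`. -/
def Implements (C : Ctx kin kout Mem Extra Msg) (P : Prot kin kout Mem Extra)
    (φ : ℕ → Run kin kout Mem Extra → ℕ → Prop) : Prop :=
  ∀ r ∈ Runs C P, ∀ m i, (P i ((r m).2 i) = Act.go ↔ Kn (Runs C P) i (φ i) r m)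

/-- Behavioral equivalence: the protocols take the same actions at all reachable states. -/
def BehEq (C : Ctx kin kout Mem Extra Msg) (P P' : Prot kin kout Mem Extra) : Prop :=
  (∀ r ∈ Runs C P, ∀ m i, P i ((r m).2 i) = P' i ((r m).2 i)) ∧
  (∀ r ∈ Runs C P', ∀ m i, P i ((r m).2 i) = P' i ((r m).2 i))

/-- `γ` is `σ`-aware. -/
def SigmaAware (C : Ctx kin kout Mem Extra Msg) (σ : Policy kin kout) : Prop :=
  ∀ P : Prot kin kout Mem Extra, ∀ r ∈ Runs C P, ∀ m i (l : Fin kin) (l' : Fin kout),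
    (l, l') ∈ σ (histOf r m) → i ∈ (r m).1.queue l →
    Kn (Runs C P) i (fun r' m' => (l, l') ∈ σ (histOf r' m')) r m

/-- `γ` is `next`-aware. -/
def NextAware (C : Ctx kin kout Mem Extra Msg)
    (next : List (Choice kin kout) → Fin kin) : Prop :=
  ∀ P : Prot kin kout Mem Extra, ∀ r ∈ Runs C P, ∀ m i (l : Fin kin),
    next (histOf r m) = l →
    Kn (Runs C P) i (fun r' m' => next (histOf r' m') = l) r m

/-- Cyclic distance from `a` to `b` (mod `kin`). -/
def distC (a b : Fin kin) : ℕ := (b.val + kin - a.val) % kin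

/-- `l` lies in the cyclic interval `[a, b)` of incoming lanes. -/
def inCyc (a b l : Fin kin) : Prop := distC a l < distC a b

/-- `mv` is compatible with every move in `S`. -/
def compatAll (O : Move kin kout → Move kin kout → Prop)
    (S : Set (Move kin kout)) (mv : Move kin kout) : Prop :=
  ∀ mv' ∈ S, O mv mv'

/-- The proposition `V_i` of the knowledge-based program `𝐏`. -/
def Vprop (O : Move kin kout → Move kin kout → Prop) (σ : Policy kin kout)
    (next : List (Choice kin kout) → Fin kin) (i : ℕ)
    (r : Run kin kout Mem Extra) (m : ℕ) : Prop :=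
  ∃ mv, moveAt (r m).1 i = some mv ∧ mv ∉ σ (histOf r m) ∧
    (∀ j mj, goingAt r m j → moveAt (r m).1 j = some mj →
        mj ∈ σ (histOf r m) → O mv mj) ∧
    (∀ j mj, j ≠ i → goingAt r m j → moveAt (r m).1 j = some mj →
        mj ∉ σ (histOf r m) → inCyc (next (histOf r m)) mv.1 mj.1 → O mv mj)

/-- The knowledge condition of the knowledge-based program `𝐏`:
`front_i ∧ ((lane_i, intent_i) ∈ σ ∨ V_i)`. -/
def phiP (O : Move kin kout → Move kin kout → Prop) (σ : Policy kin kout)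
    (next : List (Choice kin kout) → Fin kin) (i : ℕ)
    (r : Run kin kout Mem Extra) (m : ℕ) : Prop :=
  frontAt r m i ∧
    ((∃ mv, moveAt (r m).1 i = some mv ∧ mv ∈ σ (histOf r m)) ∨ Vprop O σ next i r m)

/-- Fairness of a `next` function. -/
def FairNext (C : Ctx kin kout Mem Extra Msg)
    (next : List (Choice kin kout) → Fin kin) : Prop :=
  ∀ h : ℕ → List (Choice kin kout), Feasible C.adv h →
    ∀ m (l : Fin kin), ∃ m' ≥ m, next (h m') = l

/-- Fairness of a pair `(σ, next)`. -/
def PairFair (O : Move kin kout → Move kin kout → Prop)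
    (C : Ctx kin kout Mem Extra Msg) (σ : Policy kin kout)
    (next : List (Choice kin kout) → Fin kin) : Prop :=
  ∀ h : ℕ → List (Choice kin kout), Feasible C.adv h →
    ∀ m (mv : Move kin kout), ∃ m' ≥ m,
      mv ∈ σ (h m') ∨ (next (h m') = mv.1 ∧ compatAll O (σ (h m')) mv)

/-- `next(h) = |h| mod |L_in|` at time `t`. -/
def nextL (hkin : 0 < kin) (t : ℕ) : Fin kin := ⟨t % kin, Nat.mod_lt _ hkin⟩

/-- The stages of the construction of the set `Pos_i`, starting from the lane `nxt` and
proceeding in cyclic order; `M` is the set of moves received from front agents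
(empty when there is no communication). -/
def posStage (hkin : 0 < kin) (O : Move kin kout → Move kin kout → Prop)
    (M : Set (Move kin kout)) (nxt : Fin kin) : ℕ → Set (Move kin kout)
  | 0 => ∅
  | t + 1 =>
    let S := posStage hkin O M nxt t
    let l : Fin kin := ⟨(nxt.val + t) % kin, Nat.mod_lt _ hkin⟩
    if ∃ l' : Fin kout, (l, l') ∈ M then
      S ∪ {mv | mv.1 = l ∧ mv ∈ M ∧ compatAll O S mv}
    else
      S ∪ {mv | mv.1 = l ∧ compatAll O S mv}

/-- The set `Pos_i` computed from the received moves `M`, the lane `nxt = next` and the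
agent's own lane `lanei`. -/
def PosSet (hkin : 0 < kin) (O : Move kin kout → Move kin kout → Prop)
    (M : Set (Move kin kout)) (nxt lanei : Fin kin) : Set (Move kin kout) :=
  posStage hkin O M nxt (distC nxt lanei)

/-- The stage `Pos_i^l` of the construction of `Pos_i`, for a lane `l` in the cyclic
interval `[nxt, lane_i)`. -/
def PosUpTo (hkin : 0 < kin) (O : Move kin kout → Move kin kout → Prop)
    (M : Set (Move kin kout)) (nxt l : Fin kin) : Set (Move kin kout) :=
  posStage hkin O M nxt (distC nxt l + 1)

/-- The adversary model with no failures. -/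
def NFadv (kin kout : ℕ) : Set (Adversary kin kout) :=
  {α | ∀ k i, α.Ft k i = true ∧ α.Fr k i = true}

/-- The adversary model with crash failures. -/
def CRadv (kin kout : ℕ) : Set (Adversary kin kout) :=
  {α | (∀ k i, α.Fr k i = true) ∧
    ∀ k i, α.Ft k i = false → ∀ k', k < k' → α.Ft k' i = false}

/-- The adversary model with sending omissions. -/
def SOadv (kin kout : ℕ) : Set (Adversary kin kout) :=
  {α | ∀ k i, α.Fr k i = true}

/-- The information-exchange protocol of `γ_∅`: a single memory state, no messages,
and sensor readings `⟨front_i, lane_i, intent_i, time_i⟩`. -/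
def E0 (kin kout : ℕ) : IEP kin kout Unit ℕ Empty where
  initMem _ := ()
  extra e _ := e.time
  msg _ _ _ _ := none
  upd _ _ _ _ := ()

/-- The context `γ_∅(F)`. -/
def gammaEmpty (kin kout : ℕ) (F : Set (Adversary kin kout)) : Ctx kin kout Unit ℕ Empty :=
  ⟨E0 kin kout, F⟩

/-- The protocol `P^∅`: go iff at the front and own move compatible with `Pos_i`. -/
def Pempty (hkin : 0 < kin) (O : Move kin kout → Move kin kout → Prop) :
    Prot kin kout Unit ℕ := fun _ s =>
  match s.2.1.lane with
  | LaneStatus.inLane l =>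
      if s.2.1.front ∧ compatAll O (PosSet hkin O ∅ (nextL hkin s.2.2) l) (l, s.2.1.intent)
      then Act.go else Act.noop
  | _ => Act.noop

/-- The information-exchange protocol of `γ_intent`: exactly the agents at the front of a
lane broadcast `(lane_i, intent_i)`; the memory is the set of moves received in the
current round; sensor readings are `⟨front_i, lane_i, intent_i, time_i⟩`. -/
def Eintent (kin kout : ℕ) : IEP kin kout (Set (Move kin kout)) ℕ (Move kin kout) where
  initMem _ := ∅
  extra e _ := e.time
  msg _ _ _ o :=
    if o.1.front then
      match o.1.lane with
      | LaneStatus.inLane l => some (l, o.1.intent)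
      | _ => none
    else none
  upd _ _ _ B := B

/-- The context `γ_intent(F)`. -/
def gammaIntent (kin kout : ℕ) (F : Set (Adversary kin kout)) :
    Ctx kin kout (Set (Move kin kout)) ℕ (Move kin kout) :=
  ⟨Eintent kin kout, F⟩

/-- The protocol `P^intent`: go iff at the front and own move compatible with `Pos_i`
computed from the received moves. -/
def Pintent (hkin : 0 < kin) (O : Move kin kout → Move kin kout → Prop) :
    Prot kin kout (Set (Move kin kout)) ℕ := fun _ s =>
  match s.2.1.lane with
  | LaneStatus.inLane l =>
      if s.2.1.front ∧
          compatAll O (PosSet hkin O s.1 (nextL hkin s.2.2) l) (l, s.2.1.intent)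
      then Act.go else Act.noop
  | _ => Act.noop

/-!
Without receive failures, every agent at the front of a lane hears exactly the moves `M` of the
transmitting front agents, so all front agents compute their sets `Pos` from the same data, and
a lane `k` of `[next, lane_i)` contributes to `Pos_i` exactly the moves that pass the test a front
agent on lane `k` itself performs. Hence if `i` goes, the move of every front agent `j` with lane
in `[next, lane_i)` that goes lies in `Pos_i` and is compatible with `i`'s move. Conversely, if `i`
does not go, some `(k, x) ∈ Pos_i` conflicts with `i`'s move; an adversary letting `i`, an agent `j`
with move `(k, x)` and agents realising the rest of `M` arrive simultaneously on empty lanes yields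
a run that `i` cannot tell apart from the actual one and in which `j` goes, so `i` does not know
`V_i'`.
-/

theorem distC_lt (hkin : 0 < kin) (a b : Fin kin) : distC a b < kin :=
  Nat.mod_lt _ hkin

theorem distC_self (a : Fin kin) : distC a a = 0 := by
  simp [distC]

theorem add_distC_mod (a b : Fin kin) : (a.val + distC a b) % kin = b.val := by
  rw [distC, Nat.add_mod_mod, show a.val + (b.val + kin - a.val) = b.val + kin by omega,
    Nat.add_mod_right, Nat.mod_eq_of_lt b.isLt]

theorem distC_add_mod (hkin : 0 < kin) (a : Fin kin) {t : ℕ} (ht : t < kin) :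
    distC a ⟨(a.val + t) % kin, Nat.mod_lt _ hkin⟩ = t := by
  have ha := a.isLt
  show ((a.val + t) % kin + kin - a.val) % kin = t
  rcases Nat.lt_or_ge (a.val + t) kin with h | h
  · rw [Nat.mod_eq_of_lt h, show a.val + t + kin - a.val = t + kin by omega,
      Nat.add_mod_right, Nat.mod_eq_of_lt ht]
  · rw [Nat.mod_eq_sub_mod h, Nat.mod_eq_of_lt (show a.val + t - kin < kin by omega),
      show a.val + t - kin + kin - a.val = t by omega, Nat.mod_eq_of_lt ht]

theorem distC_injective (a : Fin kin) : Function.Injective (distC a) := fun b c h =>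
  Fin.ext (by rw [← add_distC_mod a b, h, add_distC_mod])

section PosSet

variable (hkin : 0 < kin) (O : Move kin kout → Move kin kout → Prop) (M : Set (Move kin kout))
  (nxt : Fin kin)

theorem posStage_succ (t : ℕ) :
    posStage hkin O M nxt (t + 1) = posStage hkin O M nxt t ∪
      {mv | mv.1 = ⟨(nxt.val + t) % kin, Nat.mod_lt _ hkin⟩ ∧
        compatAll O (posStage hkin O M nxt t) mv ∧ ((∃ e, (mv.1, e) ∈ M) → mv ∈ M)} := by
  rw [posStage]
  split_ifs with hM
  · ext mv
    simp only [Set.mem_union, Set.mem_ofPred_eq]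
    constructor
    · rintro (h | ⟨hl, hmv, hc⟩)
      exacts [.inl h, .inr ⟨hl, hc, fun _ => hmv⟩]
    · rintro (h | ⟨hl, hc, hmv⟩)
      exacts [.inl h, .inr ⟨hl, hmv (hl ▸ hM), hc⟩]
  · ext mv
    simp only [Set.mem_union, Set.mem_ofPred_eq]
    constructor
    · rintro (h | ⟨hl, hc⟩)
      exacts [.inl h, .inr ⟨hl, hc, fun h => absurd (hl ▸ h) hM⟩]
    · rintro (h | ⟨hl, hc, -⟩)
      exacts [.inl h, .inr ⟨hl, hc⟩]

/-- Each lane is treated at exactly one stage, namely at its cyclic distance from `nxt`. -/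
theorem mem_posStage_iff {t : ℕ} (ht : t ≤ kin) {mv : Move kin kout} :
    mv ∈ posStage hkin O M nxt t ↔ distC nxt mv.1 < t ∧
      compatAll O (posStage hkin O M nxt (distC nxt mv.1)) mv ∧
      ((∃ e, (mv.1, e) ∈ M) → mv ∈ M) := by
  induction t with
  | zero => simp [posStage]
  | succ t ih =>
    have hlane : mv.1 = ⟨(nxt.val + t) % kin, Nat.mod_lt _ hkin⟩ ↔ distC nxt mv.1 = t :=
      ⟨fun h => h ▸ distC_add_mod hkin nxt (by omega),
        fun h => Fin.ext (by rw [← h]; exact (add_distC_mod nxt mv.1).symm)⟩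
    rw [posStage_succ, Set.mem_union, ih (by omega), Set.mem_ofPred_eq, hlane]
    constructor
    · rintro (⟨hlt, h⟩ | ⟨heq, h⟩)
      · exact ⟨by omega, h⟩
      · exact ⟨by omega, heq ▸ h⟩
    · rintro ⟨hlt, h⟩
      rcases Nat.lt_succ_iff_lt_or_eq.mp hlt with hlt | heq
      exacts [.inl ⟨hlt, h⟩, .inr ⟨heq, heq ▸ h⟩]

theorem mem_PosSet_iff {l : Fin kin} {mv : Move kin kout} :
    mv ∈ PosSet hkin O M nxt l ↔ inCyc nxt l mv.1 ∧
      compatAll O (PosSet hkin O M nxt mv.1) mv ∧ ((∃ e, (mv.1, e) ∈ M) → mv ∈ M) :=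
  mem_posStage_iff hkin O M nxt (distC_lt hkin nxt l).le

end PosSet

section Step

variable (P : Prot kin kout Mem Extra) (g : GState kin kout Mem Extra)

def dequeued (l : Fin kin) : List ℕ :=
  match (g.1.queue l).head? with
  | some i => if P i (g.2 i) = Act.go then (g.1.queue l).tail else g.1.queue l
  | none => g.1.queue l

def newArrival (e : EnvState kin kout) (l : Fin kin) : List ℕ :=
  if h : ∃ i l', e.adv.arrive i = (e.time + 1, l, l') then [h.choose] else []

variable (E : IEP kin kout Mem Extra Msg)

@[simp] theorem step_adv : (step E P g).1.adv = g.1.adv := rfl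

@[simp] theorem step_time : (step E P g).1.time = g.1.time + 1 := rfl

theorem step_queue (l : Fin kin) :
    (step E P g).1.queue l = dequeued P g l ++ newArrival g.1 l := by
  simp only [step, newArrival]
  split <;> simp [dequeued]

theorem step_memory (i : ℕ) :
    ((step E P g).2 i).1 = E.upd i (g.2 i) (P i (g.2 i))
      (if g.1.adv.Fr g.1.time i = true ∧ (posAt (step E P g).1 i).isSome = true then
        {m | ∃ j pj pi, E.msg j (g.2 j) (P j (g.2 j))
              (minimalReading (step E P g).1 j, E.extra (step E P g).1 j) = some m ∧
            g.1.adv.Ft g.1.time j = true ∧ posAt (step E P g).1 j = some pj ∧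
            posAt (step E P g).1 i = some pi ∧ (pj, pi) ∈ g.1.adv.T}
      else ∅) := rfl

theorem step_reading (i : ℕ) :
    ((step E P g).2 i).2 = (minimalReading (step E P g).1 i, E.extra (step E P g).1 i) := rfl

variable {P g}

theorem dequeued_sublist (l : Fin kin) : (dequeued P g l).Sublist (g.1.queue l) := by
  unfold dequeued
  split
  · split
    exacts [List.tail_sublist _, List.Sublist.refl _]
  · exact List.Sublist.refl _

theorem dequeued_of_go {l : Fin kin} {i : ℕ} (h : (g.1.queue l).head? = some i)
    (hgo : P i (g.2 i) = Act.go) : dequeued P g l = (g.1.queue l).tail := by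
  simp [dequeued, h, hgo]

theorem dequeued_of_ne_go {l : Fin kin} {i : ℕ} (h : (g.1.queue l).head? = some i)
    (hgo : P i (g.2 i) ≠ Act.go) : dequeued P g l = g.1.queue l := by
  simp [dequeued, h, hgo]

end Step

section NewArrival

variable {e : EnvState kin kout} {l : Fin kin}

theorem exists_arrive_of_mem_newArrival {a : ℕ} (h : a ∈ newArrival e l) :
    ∃ x, e.adv.arrive a = (e.time + 1, l, x) := by
  unfold newArrival at h
  split at h
  · rename_i hex
    rw [List.mem_singleton.mp h]
    exact hex.choose_spec
  · simp at h

theorem newArrival_eq_singleton {a : ℕ} {x : Fin kout} (h : e.adv.arrive a = (e.time + 1, l, x)) :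
    newArrival e l = [a] := by
  have hex : ∃ i l', e.adv.arrive i = (e.time + 1, l, l') := ⟨a, x, h⟩
  obtain ⟨x', hx'⟩ := hex.choose_spec
  rw [newArrival, dif_pos hex, List.singleton_inj]
  by_contra hne
  exact e.adv.conflictFree _ _ hne (by rw [hx', h]) (by rw [hx', h])

theorem newArrival_eq_nil (h : ∀ a x, e.adv.arrive a ≠ (e.time + 1, l, x)) :
    newArrival e l = [] := by
  rw [newArrival, dif_neg]
  rintro ⟨a, x, hax⟩
  exact h a x hax

theorem nodup_newArrival : (newArrival e l).Nodup := by
  unfold newArrival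
  split
  exacts [List.nodup_singleton _, List.nodup_nil]

end NewArrival

def QueuesWF (e : EnvState kin kout) : Prop :=
  (∀ i l, i ∈ e.queue l → (e.adv.arrive i).2.1 = l ∧ (e.adv.arrive i).1 ≤ e.time) ∧
  ∀ l, (e.queue l).Nodup

namespace QueuesWF

variable {e : EnvState kin kout}

theorem lane_eq (hwf : QueuesWF e) {i : ℕ} {l₁ l₂ : Fin kin} (h₁ : i ∈ e.queue l₁)
    (h₂ : i ∈ e.queue l₂) : l₁ = l₂ := by
  rw [← (hwf.1 i l₁ h₁).1, ← (hwf.1 i l₂ h₂).1]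

theorem head_eq (hwf : QueuesWF e) {i : ℕ} {l : Fin kin} (hf : isFront e i)
    (hm : i ∈ e.queue l) : (e.queue l).head? = some i := by
  obtain ⟨l', h'⟩ := hf
  rwa [hwf.lane_eq hm (List.mem_of_mem_head? h')]

theorem moveAt_eq_some_iff (hwf : QueuesWF e) {i : ℕ} {mv : Move kin kout} :
    moveAt e i = some mv ↔ i ∈ e.queue mv.1 ∧ mv.2 = intentOf e i := by
  unfold moveAt posAt
  split
  · rename_i hex
    simp only [Option.map_some, Option.some_inj]
    constructor
    · rintro rfl
      exact ⟨hex.choose_spec, rfl⟩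
    · rintro ⟨hm, hint⟩
      exact Prod.ext (hwf.lane_eq hex.choose_spec hm) hint.symm
  · rename_i hex
    simp only [Option.map_none, reduceCtorEq, false_iff, not_and]
    exact fun hm => absurd ⟨_, hm⟩ hex

theorem moveAt_of_head (hwf : QueuesWF e) {i : ℕ} {l : Fin kin}
    (h : (e.queue l).head? = some i) : moveAt e i = some (l, intentOf e i) :=
  hwf.moveAt_eq_some_iff.2 ⟨List.mem_of_mem_head? h, rfl⟩

theorem posAt_of_head (hwf : QueuesWF e) {i : ℕ} {l : Fin kin}
    (h : (e.queue l).head? = some i) : posAt e i = some (l, 0) := by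
  have hm := List.mem_of_mem_head? h
  have hex : ∃ l', i ∈ e.queue l' := ⟨l, hm⟩
  rw [posAt, dif_pos hex, hwf.lane_eq hex.choose_spec hm, List.eq_cons_of_mem_head? h,
    List.idxOf_cons_self]

theorem minimalReading_of_head (hwf : QueuesWF e) {i : ℕ} {l : Fin kin}
    (h : (e.queue l).head? = some i) :
    minimalReading e i = ⟨True, .inLane l, intentOf e i⟩ := by
  have hex : ∃ l', i ∈ e.queue l' := ⟨l, List.mem_of_mem_head? h⟩
  simp only [minimalReading, dif_pos hex, hwf.lane_eq hex.choose_spec (List.mem_of_mem_head? h),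
    eq_true (show isFront e i from ⟨l, h⟩)]

end QueuesWF

section StepQueues

variable {E : IEP kin kout Mem Extra Msg} {P : Prot kin kout Mem Extra}
  {g : GState kin kout Mem Extra} {l : Fin kin} {i : ℕ}

theorem QueuesWF.step (hwf : QueuesWF g.1) : QueuesWF (step E P g).1 := by
  refine ⟨fun a l ha => ?_, fun l => ?_⟩
  · rw [step_queue, List.mem_append] at ha
    rcases ha with ha | ha
    · obtain ⟨hl, ht⟩ := hwf.1 a l ((dequeued_sublist l).subset ha)
      exact ⟨hl, by rw [step_adv, step_time]; omega⟩
    · obtain ⟨x, hx⟩ := exists_arrive_of_mem_newArrival ha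
      simp [hx]
  · rw [step_queue]
    refine ((hwf.2 l).sublist (dequeued_sublist l)).append nodup_newArrival fun a ha hb => ?_
    obtain ⟨x, hx⟩ := exists_arrive_of_mem_newArrival hb
    have := (hwf.1 a l ((dequeued_sublist l).subset ha)).2
    rw [hx] at this
    omega

theorem head_step_of_ne_go (h : (g.1.queue l).head? = some i) (hgo : P i (g.2 i) ≠ Act.go) :
    ((step E P g).1.queue l).head? = some i := by
  rw [step_queue, dequeued_of_ne_go h hgo, List.head?_append, h]
  rfl

theorem notMem_step_queue_of_go (hwf : QueuesWF g.1) (h : (g.1.queue l).head? = some i)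
    (hgo : P i (g.2 i) = Act.go) (l' : Fin kin) : i ∉ (step E P g).1.queue l' := by
  have hmem := List.mem_of_mem_head? h
  rw [step_queue, List.mem_append, not_or]
  constructor
  · intro hi
    obtain rfl := hwf.lane_eq hmem ((dequeued_sublist l').subset hi)
    rw [dequeued_of_go h hgo] at hi
    have hnd := hwf.2 l
    rw [List.eq_cons_of_mem_head? h] at hnd
    exact (List.nodup_cons.1 hnd).1 hi
  · intro hi
    obtain ⟨x, hx⟩ := exists_arrive_of_mem_newArrival hi
    have := (hwf.1 i l hmem).2
    rw [hx] at this
    omega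

end StepQueues

section Runs

variable {C : Ctx kin kout Mem Extra Msg} {P : Prot kin kout Mem Extra}
  {r : Run kin kout Mem Extra}

theorem run_adv (hr : r ∈ Runs C P) (m : ℕ) : (r m).1.adv = (r 0).1.adv := by
  induction m with
  | zero => rfl
  | succ m ih => rw [hr.2 m, step_adv, ih]

theorem run_time (hr : r ∈ Runs C P) (m : ℕ) : (r m).1.time = m := by
  induction m with
  | zero => exact hr.1.2.1
  | succ m ih => rw [hr.2 m, step_time, ih]

theorem run_reading (hr : r ∈ Runs C P) (m i : ℕ) :
    ((r m).2 i).2 = (minimalReading (r m).1 i, C.iep.extra (r m).1 i) := by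
  cases m with
  | zero => rw [hr.1.2.2.2.2 i]
  | succ m => rw [hr.2 m, step_reading]

theorem run_queuesWF (hr : r ∈ Runs C P) (m : ℕ) : QueuesWF (r m).1 := by
  induction m with
  | zero => exact ⟨fun i l hi => by simp [hr.1.2.2.1 l] at hi, fun l => by simp [hr.1.2.2.1 l]⟩
  | succ m ih => rw [hr.2 m]; exact ih.step

theorem exists_eq_succ_of_isFront (hr : r ∈ Runs C P) {m i : ℕ} (h : isFront (r m).1 i) :
    ∃ n, m = n + 1 := by
  cases m with
  | zero =>
    obtain ⟨l, hl⟩ := h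
    simp [hr.1.2.2.1 l] at hl
  | succ n => exact ⟨n, rfl⟩

theorem goingAt_iff (hr : r ∈ Runs C P) {m i : ℕ} :
    goingAt r m i ↔ isFront (r m).1 i ∧ P i ((r m).2 i) = Act.go := by
  rw [goingAt, frontAt, frontAt, hr.2 m]
  constructor
  · rintro ⟨hf, hnf⟩
    refine ⟨hf, by_contra fun hgo => hnf ?_⟩
    obtain ⟨l, hl⟩ := hf
    exact ⟨l, head_step_of_ne_go hl hgo⟩
  · rintro ⟨⟨l, hl⟩, hgo⟩
    exact ⟨⟨l, hl⟩, fun ⟨l', hl'⟩ =>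
      notMem_step_queue_of_go (run_queuesWF hr m) hl hgo l' (List.mem_of_mem_head? hl')⟩

end Runs

theorem exists_run {C : Ctx kin kout Mem Extra Msg} (P : Prot kin kout Mem Extra)
    {α : Adversary kin kout} (hα : α ∈ C.adv) : ∃ r ∈ Runs C P, (r 0).1.adv = α :=
  let e₀ : EnvState kin kout := ⟨α, 0, fun _ => [], ∅⟩
  let g₀ : GState kin kout Mem Extra :=
    (e₀, fun i => (C.iep.initMem i, minimalReading e₀ i, C.iep.extra e₀ i))
  ⟨fun m => (step C.iep P)^[m] g₀,
    ⟨⟨hα, rfl, fun _ => rfl, rfl, fun _ => rfl⟩,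
      fun _ => Function.iterate_succ_apply' _ _ _⟩, rfl⟩

def frontMoves (e : EnvState kin kout) (k : ℕ) : Set (Move kin kout) :=
  {mv | ∃ j, (e.queue mv.1).head? = some j ∧ e.adv.Ft k j = true ∧ intentOf e j = mv.2}

theorem frontMoves_lane_eq {e : EnvState kin kout} {k j : ℕ} {l : Fin kin} {x : Fin kout}
    (h : (e.queue l).head? = some j) (hx : (l, x) ∈ frontMoves e k) : x = intentOf e j := by
  obtain ⟨j', hj', -, rfl⟩ := hx
  rw [h, Option.some_inj] at hj'
  rw [hj']

theorem frontMoves_unique {e : EnvState kin kout} {k : ℕ} {l : Fin kin} {x y : Fin kout}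
    (hx : (l, x) ∈ frontMoves e k) (hy : (l, y) ∈ frontMoves e k) : x = y := by
  obtain ⟨j, hj, -⟩ := id hx
  rw [frontMoves_lane_eq hj hx, frontMoves_lane_eq hj hy]

section Intent

variable {F : Set (Adversary kin kout)} {P : Prot kin kout (Set (Move kin kout)) ℕ}
  {r : Run kin kout (Set (Move kin kout)) ℕ}

theorem gammaIntent_upd (i : ℕ) (s : LState kin kout (Set (Move kin kout)) ℕ) (a : Act)
    (B : Set (Move kin kout)) : (gammaIntent kin kout F).iep.upd i s a B = B := rfl

theorem gammaIntent_msg_of_head {e : EnvState kin kout} (hwf : QueuesWF e) {j : ℕ}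
    {l : Fin kin} (h : (e.queue l).head? = some j) (s : LState kin kout (Set (Move kin kout)) ℕ)
    (a : Act) (t : ℕ) :
    (gammaIntent kin kout F).iep.msg j s a (minimalReading e j, t) = some (l, intentOf e j) := by
  simp [gammaIntent, Eintent, hwf.minimalReading_of_head h]

theorem gammaIntent_msg_of_not_isFront {e : EnvState kin kout} {j : ℕ} (h : ¬ isFront e j)
    (s : LState kin kout (Set (Move kin kout)) ℕ) (a : Act) (t : ℕ) :
    (gammaIntent kin kout F).iep.msg j s a (minimalReading e j, t) = none := by
  simp [gammaIntent, Eintent, minimalReading, h]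

/-- Without receive failures, a front agent hears every transmitting front agent, since the
transmission environment always connects the fronts of two lanes. -/
theorem run_memory_of_isFront (hFr : ∀ α ∈ F, ∀ k a, α.Fr k a = true)
    (hr : r ∈ Runs (gammaIntent kin kout F) P) {n i : ℕ} (hf : isFront (r (n + 1)).1 i) :
    ((r (n + 1)).2 i).1 = frontMoves (r (n + 1)).1 n := by
  have hwf := run_queuesWF hr (n + 1)
  have hadv : (r n).1.adv ∈ F := run_adv hr n ▸ hr.1.1
  have htime := run_time hr n
  rw [hr.2 n] at hwf hf ⊢
  obtain ⟨l, hl⟩ := hf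
  have hpos := hwf.posAt_of_head hl
  rw [step_memory, htime, gammaIntent_upd, if_pos ⟨hFr _ hadv _ _, by rw [hpos]; rfl⟩]
  ext mv
  constructor
  · rintro ⟨j, pj, pi, hmsg, hFt, -, -, -⟩
    by_cases hfj : isFront (step (gammaIntent kin kout F).iep P (r n)).1 j
    · obtain ⟨lj, hlj⟩ := hfj
      rw [gammaIntent_msg_of_head hwf hlj, Option.some_inj] at hmsg
      subst hmsg
      exact ⟨j, hlj, hFt, rfl⟩
    · rw [gammaIntent_msg_of_not_isFront hfj] at hmsg
      cases hmsg
  · rintro ⟨j, hj, hFt, hint⟩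
    refine ⟨j, (mv.1, 0), (l, 0), ?_, hFt, hwf.posAt_of_head hj, hpos,
      (r n).1.adv.T_front _ _⟩
    rw [gammaIntent_msg_of_head hwf hj, hint]

theorem run_localState_of_head (hFr : ∀ α ∈ F, ∀ k a, α.Fr k a = true)
    (hr : r ∈ Runs (gammaIntent kin kout F) P) {n i : ℕ} {l : Fin kin}
    (h : ((r (n + 1)).1.queue l).head? = some i) :
    (r (n + 1)).2 i =
      (frontMoves (r (n + 1)).1 n, ⟨True, .inLane l, intentOf (r (n + 1)).1 i⟩, n + 1) := by
  refine Prod.ext (run_memory_of_isFront hFr hr ⟨l, h⟩) ?_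
  rw [run_reading hr, (run_queuesWF hr _).minimalReading_of_head h]
  exact Prod.ext rfl (run_time hr (n + 1))

end Intent

section Pintent

variable (hkin : 0 < kin) (O : Move kin kout → Move kin kout → Prop)

theorem Pintent_eq_go_iff (i : ℕ) (M : Set (Move kin kout)) (l : Fin kin) (x : Fin kout)
    (t : ℕ) : Pintent hkin O i (M, ⟨True, .inLane l, x⟩, t) = Act.go ↔
      compatAll O (PosSet hkin O M (nextL hkin t) l) (l, x) := by
  simp [Pintent]

theorem front_of_Pintent_eq_go {i : ℕ} {s : LState kin kout (Set (Move kin kout)) ℕ}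
    (h : Pintent hkin O i s = Act.go) : s.2.1.front := by
  unfold Pintent at h
  split at h
  · split_ifs at h with hc
    exact hc.1
  · cases h

variable {F : Set (Adversary kin kout)} {P : Prot kin kout (Set (Move kin kout)) ℕ}
  {r : Run kin kout (Set (Move kin kout)) ℕ}

theorem run_Pintent_eq_go_iff_of_head (hFr : ∀ α ∈ F, ∀ k a, α.Fr k a = true)
    (hr : r ∈ Runs (gammaIntent kin kout F) P) {n i : ℕ} {l : Fin kin}
    (h : ((r (n + 1)).1.queue l).head? = some i) :
    Pintent hkin O i ((r (n + 1)).2 i) = Act.go ↔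
      compatAll O (PosSet hkin O (frontMoves (r (n + 1)).1 n) (nextL hkin (n + 1)) l)
        (l, intentOf (r (n + 1)).1 i) := by
  rw [run_localState_of_head hFr hr h, Pintent_eq_go_iff]

end Pintent

theorem length_histOf {Mem Extra : Type*} (r : Run kin kout Mem Extra) (m : ℕ) :
    (histOf r m).length = m := by
  simp [histOf, hist]

theorem phiP_empty_iff {Mem Extra : Type*} {O : Move kin kout → Move kin kout → Prop}
    {next : List (Choice kin kout) → Fin kin} {i : ℕ} {r : Run kin kout Mem Extra} {m : ℕ} :
    phiP O (fun _ => ∅) next i r m ↔ frontAt r m i ∧ ∃ mv, moveAt (r m).1 i = some mv ∧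
      ∀ j mj, j ≠ i → goingAt r m j → moveAt (r m).1 j = some mj →
        inCyc (next (histOf r m)) mv.1 mj.1 → O mv mj := by
  simp [phiP, Vprop]

theorem phiP_of_Pintent_eq_go (hkin : 0 < kin) (O : Move kin kout → Move kin kout → Prop)
    {F : Set (Adversary kin kout)} (hFr : ∀ α ∈ F, ∀ k a, α.Fr k a = true)
    {r : Run kin kout (Set (Move kin kout)) ℕ}
    (hr : r ∈ Runs (gammaIntent kin kout F) (Pintent hkin O)) {m i : ℕ}
    (hgo : Pintent hkin O i ((r m).2 i) = Act.go) :
    phiP O (fun _ => ∅) (fun h => nextL hkin h.length) i r m := by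
  have hfront : isFront (r m).1 i := by
    simpa [run_reading hr, minimalReading] using front_of_Pintent_eq_go hkin O hgo
  obtain ⟨n, rfl⟩ := exists_eq_succ_of_isFront hr hfront
  have hwf := run_queuesWF hr (n + 1)
  obtain ⟨l, hl⟩ := hfront
  rw [run_Pintent_eq_go_iff_of_head hkin O hFr hr hl] at hgo
  refine phiP_empty_iff.2 ⟨⟨l, hl⟩, _, hwf.moveAt_of_head hl, ?_⟩
  rintro j ⟨k, x⟩ - hgoing hmj hcyc
  obtain ⟨hfj, hgoj⟩ := (goingAt_iff hr).1 hgoing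
  obtain ⟨hmemj, rfl⟩ := hwf.moveAt_eq_some_iff.1 hmj
  have hj := hwf.head_eq hfj hmemj
  rw [run_Pintent_eq_go_iff_of_head hkin O hFr hr hj] at hgoj
  rw [length_histOf] at hcyc
  refine hgo _ ((mem_PosSet_iff hkin O _ _).2 ⟨hcyc, hgoj, fun ⟨y, hy⟩ => ?_⟩)
  rwa [← frontMoves_lane_eq hj hy]

section PlannedRun

/-- Arrivals in which the agent `agent k` arrives on lane `k` with intent `x` at time `t` whenever
`plan k = some x`, and every other agent `a` arrives alone, at time `t + 1 + a`. -/
def planArrive (agent : Fin kin → ℕ) (plan : Fin kin → Option (Fin kout)) (t : ℕ)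
    (dflt : Move kin kout) (a : ℕ) : ℕ × Fin kin × Fin kout :=
  match (Function.partialInv agent a).bind fun k => (plan k).map fun x => (k, x) with
  | some mv => (t, mv)
  | none => (t + 1 + a, dflt)

theorem planArrive_cases (agent : Fin kin → ℕ) (plan : Fin kin → Option (Fin kout)) (t : ℕ)
    (dflt : Move kin kout) (a : ℕ) :
    (∃ k x, agent k = a ∧ plan k = some x ∧ planArrive agent plan t dflt a = (t, k, x)) ∨
      planArrive agent plan t dflt a = (t + 1 + a, dflt) := by
  unfold planArrive
  split
  · rename_i mv hmv
    obtain ⟨k, hk, hmap⟩ := Option.bind_eq_some_iff.1 hmv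
    obtain ⟨x, hx, rfl⟩ := Option.map_eq_some_iff.1 hmap
    have hex : ∃ k', agent k' = a := by
      by_contra hne
      simp [Function.partialInv, hne] at hk
    refine .inl ⟨k, x, ?_, hx, rfl⟩
    simp only [Function.partialInv, dif_pos hex, Option.some_inj] at hk
    exact hk ▸ hex.choose_spec
  · exact .inr rfl

variable {agent : Fin kin → ℕ} {plan : Fin kin → Option (Fin kout)} {t : ℕ}
  {dflt : Move kin kout}

theorem planArrive_agent (hinj : Function.Injective agent) {k : Fin kin} {x : Fin kout}
    (h : plan k = some x) : planArrive agent plan t dflt (agent k) = (t, k, x) := by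
  simp [planArrive, Function.partialInv_left hinj, h]

theorem planArrive_conflictFree (a b : ℕ) (hab : a ≠ b)
    (ht : (planArrive agent plan t dflt a).1 = (planArrive agent plan t dflt b).1) :
    (planArrive agent plan t dflt a).2.1 ≠ (planArrive agent plan t dflt b).2.1 := by
  intro hl
  rcases planArrive_cases agent plan t dflt a with ⟨k, x, rfl, -, ha⟩ | ha <;>
    rcases planArrive_cases agent plan t dflt b with ⟨k', x', rfl, -, hb⟩ | hb <;>
    rw [ha, hb] at ht hl <;> simp only at ht hl
  · exact hab (congrArg agent hl)
  all_goals omega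

def planAdversary (agent : Fin kin → ℕ) (plan : Fin kin → Option (Fin kout)) (t : ℕ)
    (dflt : Move kin kout) (M : Set (Move kin kout)) : Adversary kin kout where
  arrive := planArrive agent plan t dflt
  conflictFree := planArrive_conflictFree
  T := Set.univ
  T_front _ _ := Set.mem_univ _
  Ft _ a := decide ((planArrive agent plan t dflt a).1 = t ∧
    (planArrive agent plan t dflt a).2 ∈ M)
  Fr _ _ := true

variable {n : ℕ} {M : Set (Move kin kout)} {C : Ctx kin kout Mem Extra Msg}
  {P : Prot kin kout Mem Extra} {r : Run kin kout Mem Extra}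

theorem planRun_queue_eq_nil (hr : r ∈ Runs C P)
    (hα : (r 0).1.adv = planAdversary agent plan (n + 1) dflt M) :
    ∀ m ≤ n, ∀ l, (r m).1.queue l = [] := by
  intro m
  induction m with
  | zero => exact fun _ => hr.1.2.2.1
  | succ m ih =>
    intro hm l
    have hdeq := dequeued_sublist (P := P) (g := r m) l
    rw [ih (by omega)] at hdeq
    rw [hr.2 m, step_queue, List.sublist_nil.1 hdeq, newArrival_eq_nil, List.append_nil]
    intro a x hax
    rw [run_adv hr, run_time hr, hα] at hax
    change planArrive agent plan (n + 1) dflt a = (m + 1, l, x) at hax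
    rcases planArrive_cases agent plan (n + 1) dflt a with
      ⟨k, y, -, -, h⟩ | h <;> rw [hax, Prod.mk.injEq] at h <;> omega

theorem planRun_queue (hr : r ∈ Runs C P)
    (hα : (r 0).1.adv = planAdversary agent plan (n + 1) dflt M) (l : Fin kin) :
    (r (n + 1)).1.queue l = newArrival (r n).1 l := by
  have hdeq := dequeued_sublist (P := P) (g := r n) l
  rw [planRun_queue_eq_nil hr hα n le_rfl l] at hdeq
  rw [hr.2 n, step_queue, List.sublist_nil.1 hdeq, List.nil_append]

theorem planRun_queue_of_plan (hr : r ∈ Runs C P)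
    (hα : (r 0).1.adv = planAdversary agent plan (n + 1) dflt M)
    (hinj : Function.Injective agent) {k : Fin kin} {x : Fin kout} (h : plan k = some x) :
    (r (n + 1)).1.queue k = [agent k] := by
  rw [planRun_queue hr hα k]
  apply newArrival_eq_singleton (x := x)
  rw [run_adv hr, run_time hr, hα]
  exact planArrive_agent hinj h

theorem planRun_queue_of_plan_eq_none (hr : r ∈ Runs C P)
    (hα : (r 0).1.adv = planAdversary agent plan (n + 1) dflt M) {k : Fin kin}
    (h : plan k = none) : (r (n + 1)).1.queue k = [] := by
  rw [planRun_queue hr hα k]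
  refine newArrival_eq_nil fun a y hay => ?_
  rw [run_adv hr, run_time hr, hα] at hay
  change planArrive agent plan (n + 1) dflt a = (n + 1, k, y) at hay
  rcases planArrive_cases agent plan (n + 1) dflt a with
    ⟨k', y', -, hk', h'⟩ | h' <;> rw [hay, Prod.mk.injEq, Prod.mk.injEq] at h'
  · rw [← h'.2.1, h] at hk'
    cases hk'
  · omega

theorem planRun_intent (hr : r ∈ Runs C P)
    (hα : (r 0).1.adv = planAdversary agent plan (n + 1) dflt M)
    (hinj : Function.Injective agent) {k : Fin kin} {x : Fin kout} (h : plan k = some x) :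
    intentOf (r (n + 1)).1 (agent k) = x := by
  rw [intentOf, run_adv hr, hα]
  change (planArrive agent plan (n + 1) dflt (agent k)).2.2 = x
  rw [planArrive_agent hinj h]

theorem planRun_frontMoves (hr : r ∈ Runs C P)
    (hα : (r 0).1.adv = planAdversary agent plan (n + 1) dflt M)
    (hinj : Function.Injective agent) (hM : ∀ k x, (k, x) ∈ M → plan k = some x) :
    frontMoves (r (n + 1)).1 n = M := by
  ext ⟨k, x⟩
  constructor
  · rintro ⟨j, hj, hFt, hint⟩
    rcases hk : plan k with _ | y
    · rw [planRun_queue_of_plan_eq_none hr hα hk] at hj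
      cases hj
    · rw [planRun_queue_of_plan hr hα hinj hk, List.head?_cons, Option.some_inj] at hj
      subst hj
      rw [planRun_intent hr hα hinj hk] at hint
      subst hint
      rw [run_adv hr, hα] at hFt
      simpa [planAdversary, planArrive_agent hinj hk] using hFt
  · intro hkx
    have hk := hM k x hkx
    refine ⟨agent k, by rw [planRun_queue_of_plan hr hα hinj hk]; rfl, ?_,
      planRun_intent hr hα hinj hk⟩
    rw [run_adv hr, hα]
    simpa [planAdversary, planArrive_agent hinj hk] using hkx

end PlannedRun

theorem exists_run_heads {C : Ctx kin kout Mem Extra Msg}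
    (hC : ∀ α : Adversary kin kout, (∀ k a, α.Fr k a = true) →
      (∀ k k' a, α.Ft k a = α.Ft k' a) → α ∈ C.adv)
    (P : Prot kin kout Mem Extra) (n i : ℕ) {M : Set (Move kin kout)}
    (hM : ∀ k x y, (k, x) ∈ M → (k, y) ∈ M → x = y) {l k : Fin kin} (hlk : l ≠ k)
    {ι x : Fin kout} (hl : ∀ y, (l, y) ∈ M → y = ι) (hk : ∀ y, (k, y) ∈ M → y = x) :
    ∃ r ∈ Runs C P, ∃ j ≠ i, ((r (n + 1)).1.queue l).head? = some i ∧
      ((r (n + 1)).1.queue k).head? = some j ∧ intentOf (r (n + 1)).1 i = ι ∧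
      intentOf (r (n + 1)).1 j = x ∧ frontMoves (r (n + 1)).1 n = M := by
  let agent : Fin kin → ℕ := fun k' => i + distC l k'
  have hinj : Function.Injective agent := fun a b h => distC_injective l (Nat.add_left_cancel h)
  have hagent : agent l = i := by simp [agent, distC_self]
  let plan : Fin kin → Option (Fin kout) := fun k' =>
    if k' = l then some ι else if k' = k then some x
    else if h : ∃ y, (k', y) ∈ M then some h.choose else none
  have hplan_l : plan l = some ι := if_pos rfl
  have hplan_k : plan k = some x := by simp [plan, hlk.symm]
  have hplan : ∀ k' y, (k', y) ∈ M → plan k' = some y := by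
    intro k' y hy
    by_cases h1 : k' = l
    · rw [h1, hplan_l, hl y (h1 ▸ hy)]
    by_cases h2 : k' = k
    · rw [h2, hplan_k, hk y (h2 ▸ hy)]
    have hex : ∃ y, (k', y) ∈ M := ⟨y, hy⟩
    simp only [plan, if_neg h1, if_neg h2, dif_pos hex, hM k' _ _ hex.choose_spec hy]
  obtain ⟨r, hr, hα⟩ := exists_run P
    (hC (planAdversary agent plan (n + 1) (l, ι) M) (fun _ _ => rfl) (fun _ _ _ => rfl))
  refine ⟨r, hr, agent k, fun h => hlk (hinj (h.trans hagent.symm)).symm, ?_, ?_, ?_,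
    planRun_intent hr hα hinj hplan_k, planRun_frontMoves hr hα hinj hplan⟩
  · rw [← hagent, planRun_queue_of_plan hr hα hinj hplan_l]
    rfl
  · rw [planRun_queue_of_plan hr hα hinj hplan_k]
    rfl
  · rw [← hagent]
    exact planRun_intent hr hα hinj hplan_l

theorem Pintent_eq_go_of_Kn (hkin : 0 < kin) (O : Move kin kout → Move kin kout → Prop)
    {F : Set (Adversary kin kout)} (hFr : ∀ α ∈ F, ∀ k a, α.Fr k a = true)
    (hF : ∀ α : Adversary kin kout, (∀ k a, α.Fr k a = true) →
      (∀ k k' a, α.Ft k a = α.Ft k' a) → α ∈ F)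
    {r : Run kin kout (Set (Move kin kout)) ℕ}
    (hr : r ∈ Runs (gammaIntent kin kout F) (Pintent hkin O)) {m i : ℕ}
    (hK : Kn (Runs (gammaIntent kin kout F) (Pintent hkin O)) i
      (phiP O (fun _ => ∅) (fun h => nextL hkin h.length) i) r m) :
    Pintent hkin O i ((r m).2 i) = Act.go := by
  obtain ⟨⟨l, hl⟩, -⟩ := phiP_empty_iff.1 (hK r hr m rfl)
  obtain ⟨n, rfl⟩ := exists_eq_succ_of_isFront hr ⟨l, hl⟩
  rw [run_Pintent_eq_go_iff_of_head hkin O hFr hr hl]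
  rintro ⟨k, x⟩ hkx
  by_contra hO
  obtain ⟨hcyc, hcompat, hMk⟩ := (mem_PosSet_iff hkin O _ _).1 hkx
  have hlk : l ≠ k := by
    rintro rfl
    exact lt_irrefl _ hcyc
  obtain ⟨r', hr', j, hji, hi', hj', hι, hx, hM⟩ :=
    exists_run_heads (C := gammaIntent kin kout F) hF (Pintent hkin O) n i
    (fun _ _ _ => frontMoves_unique) hlk (fun _ hy => frontMoves_lane_eq hl hy)
    (fun _ hy => frontMoves_unique hy (hMk ⟨_, hy⟩))
  have hst : (r' (n + 1)).2 i = (r (n + 1)).2 i := by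
    rw [run_localState_of_head hFr hr' hi', run_localState_of_head hFr hr hl, hM, hι]
  obtain ⟨-, mv, hmv, hV⟩ := phiP_empty_iff.1 (hK r' hr' (n + 1) hst)
  have hwf := run_queuesWF hr' (n + 1)
  rw [hwf.moveAt_of_head hi', hι, Option.some_inj] at hmv
  subst hmv
  have hgoing : goingAt r' (n + 1) j := by
    refine (goingAt_iff hr').2 ⟨⟨k, hj'⟩, ?_⟩
    rw [run_Pintent_eq_go_iff_of_head hkin O hFr hr' hj', hM, hx]
    exact hcompat
  exact hO (hV j (k, x) hji hgoing (by rw [hwf.moveAt_of_head hj', hx]) (by rwa [length_histOf]))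

theorem Fr_eq_true_of_mem_CR_SO {F : Set (Adversary kin kout)}
    (hF : F ∈ ({CRadv kin kout, SOadv kin kout} : Set (Set (Adversary kin kout)))) :
    ∀ α ∈ F, ∀ k a, α.Fr k a = true := by
  rcases hF with rfl | rfl
  exacts [fun α hα => hα.1, fun α hα => hα]

theorem mem_of_mem_CR_SO {F : Set (Adversary kin kout)}
    (hF : F ∈ ({CRadv kin kout, SOadv kin kout} : Set (Set (Adversary kin kout)))) :
    ∀ α : Adversary kin kout, (∀ k a, α.Fr k a = true) →
      (∀ k k' a, α.Ft k a = α.Ft k' a) → α ∈ F := by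
  rcases hF with rfl | rfl
  · exact fun α hFr hFt => ⟨hFr, fun k a h k' _ => (hFt k' k a).trans h⟩
  · exact fun α hFr _ => hFr

end Inter

open Inter

theorem Pintent_implements_kbp_general
    {kin kout : ℕ} (hkin : 0 < kin)
    (O : Move kin kout → Move kin kout → Prop) :
    ∀ F ∈ ({CRadv kin kout, SOadv kin kout} : Set (Set (Adversary kin kout))),
      Implements (gammaIntent kin kout F) (Pintent hkin O)
        (phiP O (fun _ => (∅ : Set (Move kin kout))) (fun h => nextL hkin h.length)) := by
  intro F hF r hr m i
  have hFr := Fr_eq_true_of_mem_CR_SO hF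
  refine ⟨fun hgo r' hr' m' hst => ?_, Pintent_eq_go_of_Kn hkin O hFr (mem_of_mem_CR_SO hF) hr⟩
  rw [← hst] at hgo
  exact phiP_of_Pintent_eq_go hkin O hFr hr' hgo

/-- `P^intent` implements the knowledge-based program `𝐏` (instantiated
with `next(h) = |h| mod |L_in|` and `σ(h) = ∅`) with respect to `γ_intent(F)` for each
`F ∈ {CR, SO}`. -/
theorem Pintent_implements_kbp
    {kin kout : ℕ} (hkin : 0 < kin)
    (O : Move kin kout → Move kin kout → Prop)
    (hO : ∀ a b, O a b → O b a) :
    ∀ F ∈ ({CRadv kin kout, SOadv kin kout} : Set (Set (Adversary kin kout))),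
      Implements (gammaIntent kin kout F) (Pintent hkin O)
        (phiP O (fun _ => (∅ : Set (Move kin kout))) (fun h => nextL hkin h.length)) :=
  Pintent_implements_kbp_general hkin O
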